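/- Consider the 7-dimensional real Lie algebra so3w4 with basis J_1,J_2,J_3,W_1,W_2,W_3,W_4 and brackets [J_x,J_y]=ε_{xyz}J_z, [J_x,W_i]=(J^{+|x})_{ij}W_j (the self-dual 't Hooft matrices), [W_i,W_j]=0. This satisfies the Jacobi identity, and its Ricci matrix equals diag(1/4,1/4,1/4,0,0,0,0); in particular the Ricci matrix is degenerate and not positive definite. -/

import Mathlib

open Matrix

open scoped BigOperators

/-- The Ricci matrix built from structure constants `τ^A_{IB} = τ A I B`:
`Ric^I_J = -(1/4)Tr(τ_I τ_J) - (1/4)Tr(τ_I τ_Jᵀ) + (1/8)Σ_K (τ_K τ_Kᵀ)^{IJ}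
 - (1/4)Σ_K τ^I_{KJ} Tr(τ_K) + (1/4)Σ_K τ^K_{IJ} Tr(τ_K) - (1/4)Σ_K τ^J_{KI} Tr(τ_K)`. -/
noncomputable def RicciMatrix {n : ℕ} (τ : Fin n → Fin n → Fin n → ℝ) :
    Matrix (Fin n) (Fin n) ℝ :=
  let t : Fin n → Matrix (Fin n) (Fin n) ℝ := fun I => Matrix.of fun A B => τ A I B
  Matrix.of fun I J =>
    -(1/4) * (t I * t J).trace - (1/4) * (t I * (t J)ᵀ).trace
      + (1/8) * ∑ K, (t K * (t K)ᵀ) I J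
      - (1/4) * ∑ K, τ I K J * (t K).trace
      + (1/4) * ∑ K, τ K I J * (t K).trace
      - (1/4) * ∑ K, τ J K I * (t K).trace

/-- The Jacobi identity for structure constants `τ^K_{IJ} = τ K I J`. -/
def JacobiId {n : ℕ} (τ : Fin n → Fin n → Fin n → ℝ) : Prop :=
  ∀ I J K M : Fin n,
    ∑ L, (τ M L K * τ L I J + τ M L I * τ L J K + τ M L J * τ L K I) = 0

/-- The self-dual 't Hooft matrices `J^{+|x}`. -/
noncomputable def Jp : Fin 3 → Matrix (Fin 4) (Fin 4) ℝ :=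
  ![!![0, 1/2, 0, 0; -1/2, 0, 0, 0; 0, 0, 0, 1/2; 0, 0, -1/2, 0],
    !![0, 0, -1/2, 0; 0, 0, 0, 1/2; 1/2, 0, 0, 0; 0, -1/2, 0, 0],
    !![0, 0, 0, 1/2; 0, 0, 1/2, 0; 0, -1/2, 0, 0; -1/2, 0, 0, 0]]

/-- The Levi-Civita symbol on three indices `0,1,2` (as naturals), `ε_{012} = 1`. -/
noncomputable def epsN (x y z : ℕ) : ℝ :=
  (((x : ℝ) - y) * ((y : ℝ) - z) * ((z : ℝ) - x)) / 2

/-- Extension of the entries of the 't Hooft matrices to natural number indices. -/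
noncomputable def JpN (x i j : ℕ) : ℝ :=
  if hx : x < 3 then if hi : i < 4 then if hj : j < 4 then Jp ⟨x, hx⟩ ⟨i, hi⟩ ⟨j, hj⟩
    else 0 else 0 else 0

/-- Structure constants `τ^A_{IB}` of the algebra `so3w4` in the ordered basis
`(J₁,J₂,J₃,W₁,W₂,W₃,W₄)`: `[J_x,J_y]=ε_{xyz}J_z`, `[J_x,W_i]=(J^{+|x})_{ij}W_j`,
`[W_i,W_j]=0`. -/
noncomputable def tauSO3W4 : Fin 7 → Fin 7 → Fin 7 → ℝ := fun A I B =>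
  if A.1 < 3 ∧ I.1 < 3 ∧ B.1 < 3 then epsN I.1 B.1 A.1
  else if I.1 < 3 ∧ 3 ≤ B.1 ∧ 3 ≤ A.1 then JpN I.1 (A.1 - 3) (B.1 - 3)
  else if 3 ≤ I.1 ∧ B.1 < 3 ∧ 3 ≤ A.1 then -JpN B.1 (A.1 - 3) (I.1 - 3)
  else 0

/-! All structure constants of `so3w4` lie in `(1/2)ℤ`, and both the Jacobi expression and the
Ricci matrix are homogeneous quadratic in the structure constants. Hence both reduce to identities
between integer sums over the doubled constants, which the kernel evaluates by `decide`. -/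

section ScaledIntegerConstants

variable {n : ℕ} {τ : Fin n → Fin n → Fin n → ℝ} {z : Fin n → Fin n → Fin n → ℤ} {c : ℝ}

theorem jacobiId_of_eq_mul_intCast (hτ : ∀ A I B, τ A I B = c * z A I B)
    (hz : ∀ I J K M : Fin n,
      ∑ L, (z M L K * z L I J + z M L I * z L J K + z M L J * z L K I) = 0) :
    JacobiId τ := by
  intro I J K M
  have h := congrArg (Int.cast : ℤ → ℝ) (hz I J K M)
  push_cast at h
  simp only [hτ]
  calc _ = c ^ 2 * ∑ L, ((z M L K : ℝ) * z L I J + z M L I * z L J K + z M L J * z L K I) := by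
          rw [Finset.mul_sum]; congr 1; ext L; ring
    _ = 0 := by rw [h, mul_zero]

def ricciNumerator (z : Fin n → Fin n → Fin n → ℤ) : Matrix (Fin n) (Fin n) ℤ :=
  Matrix.of fun I J =>
    -2 * ∑ A, ∑ B, z A I B * z B J A - 2 * ∑ A, ∑ B, z A I B * z A J B
      + ∑ K, ∑ B, z I K B * z J K B
      - 2 * ∑ K, z I K J * ∑ A, z A K A
      + 2 * ∑ K, z K I J * ∑ A, z A K A
      - 2 * ∑ K, z J K I * ∑ A, z A K A

theorem ricciMatrix_eq_smul_ricciNumerator (hτ : ∀ A I B, τ A I B = c * z A I B) :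
    RicciMatrix τ = (c ^ 2 / 8) • (ricciNumerator z).map (Int.cast : ℤ → ℝ) := by
  have hc : ∀ a b : ℝ, c * a * (c * b) = c ^ 2 * (a * b) := fun a b => by ring
  ext I J
  simp only [RicciMatrix, ricciNumerator, Matrix.trace, Matrix.diag_apply, Matrix.mul_apply,
    Matrix.transpose_apply, Matrix.of_apply, Matrix.map_apply, Matrix.smul_apply, smul_eq_mul, hτ,
    ← Finset.mul_sum, hc]
  push_cast
  ring

end ScaledIntegerConstants

def JpInt : Fin 3 → Matrix (Fin 4) (Fin 4) ℤ :=
  ![!![0, 1, 0, 0; -1, 0, 0, 0; 0, 0, 0, 1; 0, 0, -1, 0],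
    !![0, 0, -1, 0; 0, 0, 0, 1; 1, 0, 0, 0; 0, -1, 0, 0],
    !![0, 0, 0, 1; 0, 0, 1, 0; 0, -1, 0, 0; -1, 0, 0, 0]]

def epsInt (x y z : ℕ) : ℤ := ((x : ℤ) - y) * ((y : ℤ) - z) * ((z : ℤ) - x)

def JpNInt (x i j : ℕ) : ℤ :=
  if hx : x < 3 then if hi : i < 4 then if hj : j < 4 then JpInt ⟨x, hx⟩ ⟨i, hi⟩ ⟨j, hj⟩
    else 0 else 0 else 0

def tauSO3W4Int : Fin 7 → Fin 7 → Fin 7 → ℤ := fun A I B =>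
  if A.1 < 3 ∧ I.1 < 3 ∧ B.1 < 3 then epsInt I.1 B.1 A.1
  else if I.1 < 3 ∧ 3 ≤ B.1 ∧ 3 ≤ A.1 then JpNInt I.1 (A.1 - 3) (B.1 - 3)
  else if 3 ≤ I.1 ∧ B.1 < 3 ∧ 3 ≤ A.1 then -JpNInt B.1 (A.1 - 3) (I.1 - 3)
  else 0

theorem Jp_eq_half_mul_JpInt (x : Fin 3) (i j : Fin 4) : Jp x i j = 1 / 2 * JpInt x i j := by
  fin_cases x <;> fin_cases i <;> fin_cases j <;> norm_num [Jp, JpInt]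

theorem JpN_eq_half_mul_JpNInt (x i j : ℕ) : JpN x i j = 1 / 2 * JpNInt x i j := by
  unfold JpN JpNInt
  split_ifs <;> simp [Jp_eq_half_mul_JpInt]

theorem epsN_eq_half_mul_epsInt (x y z : ℕ) : epsN x y z = 1 / 2 * epsInt x y z := by
  unfold epsN epsInt
  push_cast
  ring

theorem tauSO3W4_eq_half_mul_tauSO3W4Int (A I B : Fin 7) :
    tauSO3W4 A I B = 1 / 2 * tauSO3W4Int A I B := by
  unfold tauSO3W4 tauSO3W4Int
  split_ifs <;> simp [epsN_eq_half_mul_epsInt, JpN_eq_half_mul_JpNInt]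

set_option maxRecDepth 100000 in
theorem tauSO3W4Int_jacobi (I J K M : Fin 7) :
    ∑ L, (tauSO3W4Int M L K * tauSO3W4Int L I J + tauSO3W4Int M L I * tauSO3W4Int L J K
      + tauSO3W4Int M L J * tauSO3W4Int L K I) = 0 := by
  revert I J K M
  decide

set_option maxRecDepth 100000 in
theorem ricciNumerator_tauSO3W4Int :
    ricciNumerator tauSO3W4Int = diagonal ![8, 8, 8, 0, 0, 0, 0] := by
  decide

theorem ricciMatrix_tauSO3W4 :
    RicciMatrix tauSO3W4 = diagonal ![1/4, 1/4, 1/4, 0, 0, 0, 0] := by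
  rw [ricciMatrix_eq_smul_ricciNumerator tauSO3W4_eq_half_mul_tauSO3W4Int,
    ricciNumerator_tauSO3W4Int, diagonal_map Int.cast_zero, ← diagonal_smul]
  congr 1
  ext i
  fin_cases i <;> norm_num

/-- The bracket of `so3w4` satisfies the Jacobi identity, and its Ricci matrix equals
`diag(1/4, 1/4, 1/4, 0, 0, 0, 0)`; in particular it is degenerate and not positive
definite. -/
theorem ricci_so3w4 :
    JacobiId tauSO3W4 ∧
    RicciMatrix tauSO3W4 = Matrix.diagonal ![1/4, 1/4, 1/4, 0, 0, 0, 0] ∧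
    (RicciMatrix tauSO3W4).det = 0 ∧
    ¬ (RicciMatrix tauSO3W4).PosDef := by
  refine ⟨jacobiId_of_eq_mul_intCast tauSO3W4_eq_half_mul_tauSO3W4Int tauSO3W4Int_jacobi,
    ricciMatrix_tauSO3W4, ?_, ?_⟩
  · rw [ricciMatrix_tauSO3W4, det_diagonal]
    exact Finset.prod_eq_zero (Finset.mem_univ 3) rfl
  · rw [ricciMatrix_tauSO3W4, posDef_diagonal_iff]
    exact fun h => (h 3).ne' rfl
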